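/- Let {c_k}_{k≥1} be a real sequence with 0 < c_* ≤ c_k ≤ c^* < 1 for all k ≥ 1, and set δ_0 = 1, δ_k = c_1c_2⋯c_k. Fix 0 < θ < 1 and for k ≥ 1 let l(θ,k) = max{l ∈ ℤ^+ : δ_l ≥ (δ_k)^{1/θ}} (a finite maximum since δ_l → 0). Then sup_{k≥2} ( l(θ,k) − l(θ,k−1) ) < +∞. -/

import Mathlib

/-!
Write `k = j + 1`. Since `δ_{j+1} = δ_j c_{j+1}` and `c_{j+1} ≥ c_*`, the threshold drops by at most the
factor `c_*^{1/θ}`: `δ_{j+1}^{1/θ} ≥ c_*^{1/θ} δ_j^{1/θ} > c_*^{1/θ} δ_{l(θ,j)+1}`. On the other hand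
`δ_{l(θ,j)+1+m} ≤ (c^*)^m δ_{l(θ,j)+1}`, so once `(c^*)^B < c_*^{1/θ}` no index beyond `l(θ,j) + B`
can reach the new threshold, i.e. `l(θ,j+1) ≤ l(θ,j) + B`.
-/

/-- `moranDelta c k = c₁c₂⋯cₖ`, with `moranDelta c 0 = 1`. -/
noncomputable def moranDelta (c : ℕ → ℝ) (k : ℕ) : ℝ :=
  ∏ i ∈ Finset.Icc 1 k, c i

/-- `lfun c θ k = max {l ∈ ℤ⁺ : δ_l ≥ (δ_k)^{1/θ}}`. -/
noncomputable def lfun (c : ℕ → ℝ) (θ : ℝ) (k : ℕ) : ℕ :=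
  sSup {l : ℕ | 1 ≤ l ∧ moranDelta c k ^ (1 / θ) ≤ moranDelta c l}

open Finset

section moranDelta

lemma moranDelta_mul_prod_Ioc (c : ℕ → ℝ) {a b : ℕ} (hab : a ≤ b) :
    moranDelta c a * ∏ i ∈ Ioc a b, c i = moranDelta c b := by
  have hIcc : ∀ n, Icc 1 n = Ioc 0 n := Icc_add_one_left_eq_Ioc 0
  simp only [moranDelta, hIcc]
  exact prod_Ioc_consecutive c (Nat.zero_le a) hab

lemma moranDelta_succ (c : ℕ → ℝ) (k : ℕ) :
    moranDelta c (k + 1) = moranDelta c k * c (k + 1) := by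
  rw [← moranDelta_mul_prod_Ioc c k.le_succ, Nat.Ioc_succ_singleton, prod_singleton]

variable {c : ℕ → ℝ}

lemma moranDelta_pos (hc : ∀ k, 1 ≤ k → 0 < c k) (k : ℕ) : 0 < moranDelta c k :=
  prod_pos fun i hi => hc i (mem_Icc.mp hi).1

lemma moranDelta_nonneg (hc : ∀ k, 1 ≤ k → 0 ≤ c k) (k : ℕ) : 0 ≤ moranDelta c k :=
  prod_nonneg fun i hi => hc i (mem_Icc.mp hi).1

lemma moranDelta_le_mul_pow {r : ℝ} (hc₀ : ∀ k, 1 ≤ k → 0 ≤ c k) (hcr : ∀ k, 1 ≤ k → c k ≤ r)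
    {a b : ℕ} (hab : a ≤ b) : moranDelta c b ≤ moranDelta c a * r ^ (b - a) := by
  rw [← moranDelta_mul_prod_Ioc c hab, ← Nat.card_Ioc, ← prod_const]
  have hIoc : ∀ i ∈ Ioc a b, 1 ≤ i := fun i hi => Nat.one_le_of_lt (mem_Ioc.mp hi).1
  exact mul_le_mul_of_nonneg_left
    (prod_le_prod (fun i hi => hc₀ i (hIoc i hi)) fun i hi => hcr i (hIoc i hi))
    (moranDelta_nonneg hc₀ a)

lemma bddAbove_setOf_le_moranDelta {r ε : ℝ} (hc₀ : ∀ k, 1 ≤ k → 0 ≤ c k)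
    (hcr : ∀ k, 1 ≤ k → c k ≤ r) (hr : r < 1) (hε : 0 < ε) :
    BddAbove {l : ℕ | ε ≤ moranDelta c l} := by
  obtain ⟨N, hN⟩ := exists_pow_lt_of_lt_one hε hr
  refine ⟨N, fun l hl => ?_⟩
  by_contra! hNl
  have hr₀ : 0 ≤ r := (hc₀ 1 le_rfl).trans (hcr 1 le_rfl)
  have hδl : moranDelta c l ≤ r ^ l := by
    simpa [moranDelta] using moranDelta_le_mul_pow hc₀ hcr (Nat.zero_le l)
  have := pow_le_pow_of_le_one hr₀ hr.le hNl.le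
  exact (hN.trans_le' (hδl.trans this)).not_ge hl

end moranDelta

section lfun

variable {c : ℕ → ℝ} {θ : ℝ} {k : ℕ}

lemma moranDelta_lfun_add_one_lt
    (hbdd : BddAbove {l : ℕ | 1 ≤ l ∧ moranDelta c k ^ (1 / θ) ≤ moranDelta c l}) :
    moranDelta c (lfun c θ k + 1) < moranDelta c k ^ (1 / θ) := by
  by_contra! h
  have := le_csSup hbdd ⟨Nat.le_add_left 1 _, h⟩
  exact (lfun c θ k).lt_succ_self.not_ge this

lemma rpow_le_moranDelta_lfun
    (hbdd : BddAbove {l : ℕ | 1 ≤ l ∧ moranDelta c k ^ (1 / θ) ≤ moranDelta c l})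
    (hpos : 0 < lfun c θ k) :
    moranDelta c k ^ (1 / θ) ≤ moranDelta c (lfun c θ k) := by
  have hne : {l : ℕ | 1 ≤ l ∧ moranDelta c k ^ (1 / θ) ≤ moranDelta c l}.Nonempty := by
    by_contra! hempty
    simp only [lfun, hempty, csSup_empty, bot_eq_zero', lt_self_iff_false] at hpos
  exact (Nat.sSup_mem hne hbdd).2

variable {cs cS : ℝ} (hcs : 0 < cs) (hcS : cS < 1) (hc : ∀ k, 1 ≤ k → cs ≤ c k ∧ c k ≤ cS)
include hcs hcS hc

lemma bddAbove_lfun_set (k : ℕ) :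
    BddAbove {l : ℕ | 1 ≤ l ∧ moranDelta c k ^ (1 / θ) ≤ moranDelta c l} := by
  have hc₀ : ∀ k, 1 ≤ k → 0 < c k := fun k hk => hcs.trans_le (hc k hk).1
  exact (bddAbove_setOf_le_moranDelta (fun k hk => (hc₀ k hk).le) (fun k hk => (hc k hk).2) hcS
    (Real.rpow_pos_of_pos (moranDelta_pos hc₀ k) _)).mono fun l hl => hl.2

lemma lfun_succ_le_add (hθ : 0 < θ) {B : ℕ} (hB : cS ^ B < cs ^ (1 / θ)) (k : ℕ) :
    lfun c θ (k + 1) ≤ lfun c θ k + B := by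
  have hc₀ : ∀ k, 1 ≤ k → 0 < c k := fun k hk => hcs.trans_le (hc k hk).1
  have hδ : ∀ k, 0 < moranDelta c k := moranDelta_pos hc₀
  set L := lfun c θ k
  set L' := lfun c θ (k + 1)
  by_contra! hL
  have hcS₀ : 0 ≤ cS := (hc₀ 1 le_rfl).le.trans (hc 1 le_rfl).2
  have hupper : moranDelta c L' ≤ moranDelta c (L + 1) * cS ^ B := calc
    moranDelta c L' ≤ moranDelta c (L + 1) * cS ^ (L' - (L + 1)) :=
      moranDelta_le_mul_pow (fun k hk => (hc₀ k hk).le) (fun k hk => (hc k hk).2) (by omega)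
    _ ≤ moranDelta c (L + 1) * cS ^ B :=
      mul_le_mul_of_nonneg_left (pow_le_pow_of_le_one hcS₀ hcS.le (by omega)) (hδ _).le
  have hck := hc (k + 1) k.succ_pos
  have hlower : moranDelta c (L + 1) * cs ^ (1 / θ) < moranDelta c L' := calc
    moranDelta c (L + 1) * cs ^ (1 / θ) ≤ moranDelta c (L + 1) * c (k + 1) ^ (1 / θ) := by
      gcongr
      · exact (hδ _).le
      · exact hck.1
    _ < moranDelta c k ^ (1 / θ) * c (k + 1) ^ (1 / θ) := by
      gcongr
      · exact Real.rpow_pos_of_pos (hc₀ _ k.succ_pos) _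
      · exact moranDelta_lfun_add_one_lt (bddAbove_lfun_set hcs hcS hc k)
    _ = moranDelta c (k + 1) ^ (1 / θ) := by
      rw [moranDelta_succ, Real.mul_rpow (hδ k).le (hc₀ _ k.succ_pos).le]
    _ ≤ moranDelta c L' :=
      rpow_le_moranDelta_lfun (bddAbove_lfun_set hcs hcS hc (k + 1)) (by omega)
  have := mul_lt_mul_of_pos_left hB (hδ (L + 1))
  linarith

end lfun

theorem lfun_increments_bounded_general (c : ℕ → ℝ) (cs cS : ℝ)
    (hcs : 0 < cs) (hcS : cS < 1)
    (hc : ∀ k, 1 ≤ k → cs ≤ c k ∧ c k ≤ cS)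
    (θ : ℝ) (hθ0 : 0 < θ) :
    ∃ B : ℕ, ∀ k, 2 ≤ k → lfun c θ k - lfun c θ (k - 1) ≤ B := by
  obtain ⟨B, hB⟩ := exists_pow_lt_of_lt_one (Real.rpow_pos_of_pos hcs (1 / θ)) hcS
  refine ⟨B, fun k hk => ?_⟩
  obtain ⟨j, rfl⟩ : ∃ j, k = j + 1 := ⟨k - 1, by omega⟩
  have := lfun_succ_le_add hcs hcS hc hθ0 hB j
  simp only [Nat.add_sub_cancel]
  omega

/-- If `0 < c∗ ≤ c_k ≤ c* < 1` for all `k ≥ 1`, then for fixed `0 < θ < 1`,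
`sup_{k≥2} (l(θ,k) − l(θ,k−1)) < +∞`. -/
theorem lfun_increments_bounded (c : ℕ → ℝ) (cs cS : ℝ)
    (hcs : 0 < cs) (hcS : cS < 1)
    (hc : ∀ k, 1 ≤ k → cs ≤ c k ∧ c k ≤ cS)
    (θ : ℝ) (hθ0 : 0 < θ) (hθ1 : θ < 1) :
    ∃ B : ℕ, ∀ k, 2 ≤ k → lfun c θ k - lfun c θ (k - 1) ≤ B :=
  lfun_increments_bounded_general c cs cS hcs hcS hc θ hθ0
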